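/- arXiv:math/0306297 — 3 statements merged into one kernel-verified Lean document; each statement's English description precedes it below -/
import Mathlib

section
/- Let T be a pretriangulated category with shift functor Σ, let X →t Y →s Z →u ΣX be a distinguished triangle, and let f : X → X and g : Y → Y be split idempotents satisfying g ∘ t = t ∘ f. Then there exists a split idempotent h : Z → Z with h ∘ s = s ∘ g and (Σf) ∘ u = u ∘ h, together with splittings π_f : X → im(f), ι_f : im(f) → X, π_g : Y → im(g), ι_g : im(g) → Y, π_h : Z → im(h), ι_h : im(h) → Z, and a distinguished triangle im(f) → im(g) → im(h) → Σ im(f) such that both (π_f, π_g, π_h) and (ι_f, ι_g, ι_h) are morphisms of triangles from X → Y → Z → ΣX to the triangle of images and back respectively. -/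
open CategoryTheory CategoryTheory.Limits CategoryTheory.Pretriangulated

/-!
Restrict `t` to the images, `t' := ιf ≫ t ≫ πg`, and complete it to a distinguished triangle
`im f ⟶ im g ⟶ Ih ⟶ (im f)⟦1⟧`. The axioms of a pretriangulated category extend `(πf, πg)` and
`(ιf, ιg)` to morphisms of triangles `π` and `ι`. The composite `ι ≫ π` is the identity on the
first two objects, so by the five lemma it is an isomorphism of triangles; correcting `ι` by its
inverse makes `ι` a section of `π`, and `h` is the third component of `π ≫ ι`.
-/

section SplitIdempotents

variable {C : Type*} [Category C] {X Y If Ig : C} {t : X ⟶ Y} {f : X ⟶ X} {g : Y ⟶ Y}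
  {πf : X ⟶ If} {ιf : If ⟶ X} {πg : Y ⟶ Ig} {ιg : Ig ⟶ Y}

lemma comm_retraction_of_comm_idempotents (hf₁ : πf ≫ ιf = f) (hg₁ : πg ≫ ιg = g)
    (hg₂ : ιg ≫ πg = 𝟙 Ig) (hcomm : t ≫ g = f ≫ t) :
    t ≫ πg = πf ≫ ιf ≫ t ≫ πg := calc
  t ≫ πg = t ≫ g ≫ πg := by rw [← hg₁, Category.assoc, hg₂, Category.comp_id]
  _ = πf ≫ ιf ≫ t ≫ πg := by rw [reassoc_of% hcomm, ← reassoc_of% hf₁]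

lemma comm_section_of_comm_idempotents (hf₁ : πf ≫ ιf = f) (hf₂ : ιf ≫ πf = 𝟙 If)
    (hg₁ : πg ≫ ιg = g) (hcomm : t ≫ g = f ≫ t) :
    (ιf ≫ t ≫ πg) ≫ ιg = ιf ≫ t := calc
  (ιf ≫ t ≫ πg) ≫ ιg = ιf ≫ f ≫ t := by simp only [Category.assoc, hg₁, hcomm]
  _ = ιf ≫ t := by rw [← hf₁, Category.assoc, reassoc_of% hf₂]

end SplitIdempotents

namespace CategoryTheory.Pretriangulated

variable {C : Type*} [Category C] [Preadditive C] [HasZeroObject C] [HasShift C ℤ]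
  [∀ n : ℤ, (shiftFunctor C n).Additive] [Pretriangulated C]

lemma isIso_of_isIso₁₂ {T₁ T₂ : Triangle C} (φ : T₁ ⟶ T₂) (hT₁ : T₁ ∈ distTriang C)
    (hT₂ : T₂ ∈ distTriang C) (h₁ : IsIso φ.hom₁) (h₂ : IsIso φ.hom₂) : IsIso φ :=
  Triangle.isIso_of_isIsos φ h₁ h₂ (isIso₃_of_isIso₁₂ φ hT₁ hT₂ h₁ h₂)

lemma exists_section_of_section₁₂ {T₁ T₂ : Triangle C} (hT₂ : T₂ ∈ distTriang C)
    (r : T₁ ⟶ T₂) (i : T₂ ⟶ T₁) (h₁ : i.hom₁ ≫ r.hom₁ = 𝟙 _) (h₂ : i.hom₂ ≫ r.hom₂ = 𝟙 _) :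
    ∃ i' : T₂ ⟶ T₁, i'.hom₁ = i.hom₁ ∧ i'.hom₂ = i.hom₂ ∧ i' ≫ r = 𝟙 T₂ := by
  set e := i ≫ r
  have he₁ : e.hom₁ = 𝟙 _ := h₁
  have he₂ : e.hom₂ = 𝟙 _ := h₂
  have := isIso_of_isIso₁₂ e hT₂ hT₂ (he₁ ▸ inferInstance) (he₂ ▸ inferInstance)
  have hinv₁ : (inv e).hom₁ = 𝟙 _ := calc
    (inv e).hom₁ = (e ≫ inv e).hom₁ := by rw [comp_hom₁, he₁, Category.id_comp]
    _ = 𝟙 _ := by rw [IsIso.hom_inv_id, id_hom₁]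
  have hinv₂ : (inv e).hom₂ = 𝟙 _ := calc
    (inv e).hom₂ = (e ≫ inv e).hom₂ := by rw [comp_hom₂, he₂, Category.id_comp]
    _ = 𝟙 _ := by rw [IsIso.hom_inv_id, id_hom₂]
  refine ⟨inv e ≫ i, ?_, ?_, by rw [Category.assoc, IsIso.inv_hom_id]⟩
  · rw [comp_hom₁, hinv₁, Category.id_comp]
  · rw [comp_hom₂, hinv₂, Category.id_comp]

end CategoryTheory.Pretriangulated

/-- Let `X ⟶ Y ⟶ Z ⟶ X⟦1⟧` be a distinguished triangle in a pretriangulated category,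
and let `f : X ⟶ X`, `g : Y ⟶ Y` be split idempotents (with given splittings) commuting
with `t : X ⟶ Y`. Then there is a split idempotent `h : Z ⟶ Z` compatible with `s` and
`u`, with a splitting `(πh, ιh)`, and a distinguished triangle
`im f ⟶ im g ⟶ im h ⟶ (im f)⟦1⟧` such that the projections `(πf, πg, πh)` and the
inclusions `(ιf, ιg, ιh)` are morphisms of triangles. -/
theorem splitIdempotent_of_distTriang {T : Type*} [Category T] [Preadditive T]
    [HasZeroObject T] [HasShift T ℤ] [∀ n : ℤ, (shiftFunctor T n).Additive]
    [Pretriangulated T]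
    {X Y Z : T} (t : X ⟶ Y) (s : Y ⟶ Z) (u : Z ⟶ X⟦(1 : ℤ)⟧)
    (hdist : Triangle.mk t s u ∈ distTriang T)
    (f : X ⟶ X) (g : Y ⟶ Y)
    {If Ig : T} (πf : X ⟶ If) (ιf : If ⟶ X) (hf₁ : πf ≫ ιf = f) (hf₂ : ιf ≫ πf = 𝟙 If)
    (πg : Y ⟶ Ig) (ιg : Ig ⟶ Y) (hg₁ : πg ≫ ιg = g) (hg₂ : ιg ≫ πg = 𝟙 Ig)
    (hcomm : t ≫ g = f ≫ t) :
    ∃ (h : Z ⟶ Z) (Ih : T) (πh : Z ⟶ Ih) (ιh : Ih ⟶ Z)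
      (t' : If ⟶ Ig) (s' : Ig ⟶ Ih) (u' : Ih ⟶ If⟦(1 : ℤ)⟧),
      s ≫ h = g ≫ s ∧ h ≫ u = u ≫ f⟦(1 : ℤ)⟧' ∧
      πh ≫ ιh = h ∧ ιh ≫ πh = 𝟙 Ih ∧
      (Triangle.mk t' s' u' ∈ distTriang T) ∧
      (t ≫ πg = πf ≫ t' ∧ s ≫ πh = πg ≫ s' ∧ u ≫ πf⟦(1 : ℤ)⟧' = πh ≫ u') ∧
      (t' ≫ ιg = ιf ≫ t ∧ s' ≫ ιh = ιg ≫ s ∧ u' ≫ ιf⟦(1 : ℤ)⟧' = ιh ≫ u) := by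
  obtain ⟨Ih, s', u', hdist'⟩ := distinguished_cocone_triangle (ιf ≫ t ≫ πg)
  let π := completeDistinguishedTriangleMorphism _ _ hdist hdist' πf πg
    (comm_retraction_of_comm_idempotents hf₁ hg₁ hg₂ hcomm)
  let ι₀ := completeDistinguishedTriangleMorphism _ _ hdist' hdist ιf ιg
    (comm_section_of_comm_idempotents hf₁ hf₂ hg₁ hcomm)
  obtain ⟨ι, hι₁, hι₂, hιπ⟩ := exists_section_of_section₁₂ hdist' π ι₀ hf₂ hg₂
  replace hι₁ : ι.hom₁ = ιf := hι₁
  replace hι₂ : ι.hom₂ = ιg := hι₂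
  have hπι₁ : (π ≫ ι).hom₁ = f := by rw [comp_hom₁, hι₁]; exact hf₁
  have hπι₂ : (π ≫ ι).hom₂ = g := by rw [comp_hom₂, hι₂]; exact hg₁
  refine ⟨(π ≫ ι).hom₃, Ih, π.hom₃, ι.hom₃, _, s', u', ?_, ?_, rfl,
    congrArg TriangleMorphism.hom₃ hιπ, hdist', ⟨π.comm₁, π.comm₂, π.comm₃⟩, ?_, ?_, ?_⟩
  · have h := (π ≫ ι).comm₂; rw [hπι₂] at h; exact h
  · have h := (π ≫ ι).comm₃; rw [hπι₁] at h; exact h.symm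
  · have h := ι.comm₁; rw [hι₁, hι₂] at h; exact h
  · have h := ι.comm₂; rw [hι₂] at h; exact h
  · have h := ι.comm₃; rw [hι₁] at h; exact h
end

section
/- Let X be a ℚ-linear (preadditive, ℚ-linear hom-groups) idempotent complete category, let u : A → B, d : B → A, a : A → A, b : B → B be morphisms, and let α ∈ ℚ be a nonzero scalar such that α·a = d ∘ b ∘ u, b ∘ b = b, and u ∘ d = α·1_B. Then a ∘ a = a, u ∘ a = b ∘ u, a ∘ d = d ∘ b, and the induced morphism im(a) → im(b) on images of the idempotents a and b is an isomorphism. -/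
open CategoryTheory CategoryTheory.Limits

/-- Let `X` be a ℚ-linear idempotent complete category, `u : A ⟶ B`, `d : B ⟶ A`,
`a : A ⟶ A`, `b : B ⟶ B` morphisms and `α ∈ ℚ` a nonzero scalar with `α • a = d ∘ b ∘ u`,
`b ∘ b = b` and `u ∘ d = α • 1_B`. Then `a` is an idempotent, `u ∘ a = b ∘ u`,
`a ∘ d = d ∘ b`, and any morphism `Iu : im a ⟶ im b` induced on images of the
idempotents `a` and `b` (for any splittings) is an isomorphism. -/
theorem isIso_induced_of_scalar_commute {C : Type*} [Category C] [Preadditive C]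
    [CategoryTheory.Linear ℚ C] [IsIdempotentComplete C]
    {A B : C} (u : A ⟶ B) (d : B ⟶ A) (a : A ⟶ A) (b : B ⟶ B)
    (α : ℚ) (hα : α ≠ 0)
    (h₁ : α • a = u ≫ b ≫ d) (h₂ : b ≫ b = b) (h₃ : d ≫ u = α • 𝟙 B) :
    a ≫ a = a ∧ a ≫ u = u ≫ b ∧ d ≫ a = b ≫ d ∧
    ∀ {Ia Ib : C} (πa : A ⟶ Ia) (ιa : Ia ⟶ A) (πb : B ⟶ Ib) (ιb : Ib ⟶ B),
      πa ≫ ιa = a → ιa ≫ πa = 𝟙 Ia → πb ≫ ιb = b → ιb ≫ πb = 𝟙 Ib →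
      ∀ (Iu : Ia ⟶ Ib), πa ≫ Iu = u ≫ πb → Iu ≫ ιb = ιa ≫ u → IsIso Iu := by
  have ha : a = α⁻¹ • (u ≫ b ≫ d) := by rw [← h₁, inv_smul_smul₀ hα]
  have hX : (u ≫ b ≫ d) ≫ (u ≫ b ≫ d) = α • (u ≫ b ≫ d) := by
    calc (u ≫ b ≫ d) ≫ (u ≫ b ≫ d) = u ≫ b ≫ (d ≫ u) ≫ b ≫ d := by
          simp only [Category.assoc]
      _ = u ≫ b ≫ (α • 𝟙 B) ≫ b ≫ d := by rw [h₃]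
      _ = α • (u ≫ (b ≫ b) ≫ d) := by
          simp [Linear.smul_comp, Linear.comp_smul]
      _ = α • (u ≫ b ≫ d) := by rw [h₂]
  have haa : a ≫ a = a := by
    rw [ha, Linear.smul_comp, Linear.comp_smul, hX, smul_smul, smul_smul]
    congr 1
    field_simp
  have hau : a ≫ u = u ≫ b := by
    rw [ha, Linear.smul_comp]
    have : (u ≫ b ≫ d) ≫ u = α • (u ≫ b) := by
      simp only [Category.assoc, h₃, Linear.comp_smul, Category.comp_id]
    rw [this, smul_smul, inv_mul_cancel₀ hα, one_smul]
  have hda : d ≫ a = b ≫ d := by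
    rw [ha, Linear.comp_smul]
    have : d ≫ u ≫ b ≫ d = α • (b ≫ d) := by
      rw [← Category.assoc, h₃, Linear.smul_comp, Category.id_comp]
    rw [this, smul_smul, inv_mul_cancel₀ hα, one_smul]
  refine ⟨haa, hau, hda, ?_⟩
  intro Ia Ib πa ιa πb ιb hpa hip hpb hib Iu hIu1 hIu2
  have hIa : ιa ≫ a = ιa := by rw [← hpa, ← Category.assoc, hip, Category.id_comp]
  refine ⟨α⁻¹ • (ιb ≫ d ≫ πa), ?_, ?_⟩
  · -- Iu ≫ inv = 𝟙 Ia
    rw [Linear.comp_smul, ← Category.assoc, hIu2]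
    have key : ιa ≫ u ≫ d ≫ πa = α • 𝟙 Ia := by
      have h5 : ιa ≫ u = ιa ≫ u ≫ b := by
        conv_lhs => rw [← hIa, Category.assoc, hau]
      calc ιa ≫ u ≫ d ≫ πa = (ιa ≫ u) ≫ d ≫ πa := by simp only [Category.assoc]
        _ = (ιa ≫ u ≫ b) ≫ d ≫ πa := by rw [← h5]
        _ = ιa ≫ (u ≫ b ≫ d) ≫ πa := by simp only [Category.assoc]
        _ = ιa ≫ (α • a) ≫ πa := by rw [h₁]
        _ = α • (ιa ≫ a ≫ πa) := by
            simp [Linear.smul_comp, Linear.comp_smul]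
        _ = α • 𝟙 Ia := by rw [← Category.assoc, hIa, hip]
    rw [Category.assoc, key, smul_smul, inv_mul_cancel₀ hα, one_smul]
  · -- inv ≫ Iu = 𝟙 Ib
    rw [Linear.smul_comp]
    have : (ιb ≫ d ≫ πa) ≫ Iu = α • 𝟙 Ib := by
      calc (ιb ≫ d ≫ πa) ≫ Iu = ιb ≫ d ≫ (πa ≫ Iu) := by simp only [Category.assoc]
        _ = ιb ≫ d ≫ u ≫ πb := by rw [hIu1]
        _ = ιb ≫ (d ≫ u) ≫ πb := by simp only [Category.assoc]
        _ = ιb ≫ (α • 𝟙 B) ≫ πb := by rw [h₃]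
        _ = α • (ιb ≫ πb) := by simp [Linear.smul_comp, Linear.comp_smul]
        _ = α • 𝟙 Ib := by rw [hib]
    rw [this, smul_smul, inv_mul_cancel₀ hα, one_smul]
end

section
/- Let T be a pretriangulated category with shift Σ (and with finite biproducts), and let A ⊕ B → A ⊕ C → D → Σ(A ⊕ B) be a distinguished triangle whose first morphism is given in matrix form by components a : A → A, b : B → A, c : A → C, d : B → C, where a is an isomorphism. Then this triangle is isomorphic to the direct sum of the contractible triangle A →1 A → 0 → ΣA and a distinguished triangle B →t C → D → ΣB, where t = d − c ∘ a⁻¹ ∘ b; in particular B →t C → D → ΣB is a distinguished triangle. -/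
open CategoryTheory CategoryTheory.Limits CategoryTheory.Pretriangulated ZeroObject

/-!
Gaussian elimination on the invertible entry `a` gives automorphisms of `A ⊞ B` and an
isomorphism `A ⊞ C ≅ A ⊞ C` turning the first morphism into `biprod.map (𝟙 A) t`. Completing `t`
to a distinguished triangle `B ⟶ C ⟶ E ⟶ B⟦1⟧` and adding the contractible triangle on `A` gives
a distinguished triangle with first morphism `biprod.map (𝟙 A) t`, so it is isomorphic to the given
one. This identifies `D` with `0 ⊞ E ≅ E`, and transporting the triangle on `t` along `E ≅ D`
gives the required summand.
-/

namespace CategoryTheory.Limits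

section

variable {C D : Type*} [Category C] [Category D] [HasZeroMorphisms C] [HasZeroMorphisms D]
  [HasBinaryBiproducts C] [HasBinaryBiproducts D]

@[simps]
noncomputable def biprodIsoPiBool (X : Bool → C) [HasProduct X] : X false ⊞ X true ≅ ∏ᶜ X where
  hom := Pi.lift fun | false => biprod.fst | true => biprod.snd
  inv := biprod.lift (Pi.π X false) (Pi.π X true)
  inv_hom_id := Pi.hom_ext _ _ fun b => by cases b <;> simp

lemma biprod_map_comp_biprodIsoPiBool_hom {X Y : Bool → C} [HasProduct X] [HasProduct Y]
    (f : ∀ b, X b ⟶ Y b) :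
    biprod.map (f false) (f true) ≫ (biprodIsoPiBool Y).hom =
      (biprodIsoPiBool X).hom ≫ Pi.map f :=
  Pi.hom_ext _ _ fun b => by cases b <;> simp

lemma biprod_desc_comp_map_biprodIsoPiBool_hom (G : C ⥤ D) [G.PreservesZeroMorphisms]
    {X : Bool → C} {Z : Bool → D} [HasProduct X] [HasProduct Z]
    [HasProduct fun b => G.obj (X b)] [IsIso (piComparison G X)] (f : ∀ b, Z b ⟶ G.obj (X b)) :
    biprod.desc (f false ≫ G.map biprod.inl) (f true ≫ G.map biprod.inr) ≫
        G.map (biprodIsoPiBool X).hom =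
      (biprodIsoPiBool Z).hom ≫ Pi.map f ≫ inv (piComparison G X) := by
  rw [← cancel_mono (piComparison G X)]
  simp only [Category.assoc, IsIso.inv_hom_id, Category.comp_id]
  refine Pi.hom_ext _ _ fun b => biprod.hom_ext' _ _ ?_ ?_ <;> cases b <;>
    simp [← G.map_comp]

end

lemma biprod.exists_isos_desc_lift_comp_eq_map_id {C : Type*} [Category C] [Preadditive C]
    [HasBinaryBiproducts C] {X₁ X₂ Y₁ Y₂ : C} (f₁₁ : X₁ ⟶ Y₁) (f₁₂ : X₁ ⟶ Y₂) (f₂₁ : X₂ ⟶ Y₁)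
    (f₂₂ : X₂ ⟶ Y₂) [IsIso f₁₁] :
    ∃ (L : X₁ ⊞ X₂ ≅ X₁ ⊞ X₂) (R : Y₁ ⊞ Y₂ ≅ X₁ ⊞ Y₂),
      biprod.desc (biprod.lift f₁₁ f₁₂) (biprod.lift f₂₁ f₂₂) ≫ R.hom =
        L.hom ≫ biprod.map (𝟙 X₁) (f₂₂ - f₂₁ ≫ inv f₁₁ ≫ f₁₂) :=
  ⟨Biprod.unipotentLower (f₂₁ ≫ inv f₁₁),
    Biprod.unipotentUpper (-(inv f₁₁ ≫ f₁₂)) ≪≫ biprod.mapIso (asIso f₁₁).symm (Iso.refl _),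
    by ext <;> simp [Biprod.ofComponents, neg_add_eq_sub]⟩

end CategoryTheory.Limits

namespace CategoryTheory.Pretriangulated

noncomputable def Triangle.biprod {C : Type*} [Category C] [HasZeroMorphisms C] [HasShift C ℤ]
    [HasBinaryBiproducts C] (T₁ T₂ : Triangle C) : Triangle C :=
  Triangle.mk (biprod.map T₁.mor₁ T₂.mor₁) (biprod.map T₁.mor₂ T₂.mor₂)
    (biprod.desc (T₁.mor₃ ≫ biprod.inl⟦(1 : ℤ)⟧') (T₂.mor₃ ≫ biprod.inr⟦(1 : ℤ)⟧'))

variable {C : Type*} [Category C] [Preadditive C] [HasZeroObject C] [HasShift C ℤ]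
  [∀ n : ℤ, (CategoryTheory.shiftFunctor C n).Additive] [Pretriangulated C]

lemma Triangle.biprod_distinguished {T₁ T₂ : Triangle C} (h₁ : T₁ ∈ distTriang C)
    (h₂ : T₂ ∈ distTriang C) : T₁.biprod T₂ ∈ distTriang C := by
  let F : Bool → Triangle C := fun | false => T₁ | true => T₂
  have hF : productTriangle F ∈ distTriang C :=
    productTriangle_distinguished F (by rintro (_ | _) <;> assumption)
  refine isomorphic_distinguished _ hF _ (Triangle.isoMk _ _
    (biprodIsoPiBool fun b => (F b).obj₁) (biprodIsoPiBool fun b => (F b).obj₂)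
    (biprodIsoPiBool fun b => (F b).obj₃) ?_ ?_ ?_)
  · exact biprod_map_comp_biprodIsoPiBool_hom fun b => (F b).mor₁
  · exact biprod_map_comp_biprodIsoPiBool_hom fun b => (F b).mor₂
  · exact biprod_desc_comp_map_biprodIsoPiBool_hom _ fun b => (F b).mor₃

lemma distinguished_mk_comp_iso₃ {X Y Z Z' : C} {f : X ⟶ Y} {g : Y ⟶ Z} {h : Z ⟶ X⟦(1 : ℤ)⟧}
    (hT : Triangle.mk f g h ∈ distTriang C) (e : Z ≅ Z') :
    Triangle.mk f (g ≫ e.hom) (e.inv ≫ h) ∈ distTriang C :=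
  isomorphic_distinguished _ hT _ (Triangle.isoMk _ _ (Iso.refl X) (Iso.refl Y) e.symm
    (by simp [Triangle.mk]) (by simp [Triangle.mk]) (by simp [Triangle.mk]))

lemma contractible_biprod_distinguished (A : C) {X Y Z : C} {f : X ⟶ Y} {g : Y ⟶ Z}
    {h : Z ⟶ X⟦(1 : ℤ)⟧} (hT : Triangle.mk f g h ∈ distTriang C) :
    Triangle.mk (biprod.map (𝟙 A) f) (biprod.map (0 : A ⟶ 0) g)
      (biprod.desc 0 (h ≫ (biprod.inr : X ⟶ A ⊞ X)⟦(1 : ℤ)⟧')) ∈ distTriang C := by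
  simpa [Triangle.biprod, contractibleTriangle, Triangle.mk] using
    (contractibleTriangle A).biprod_distinguished (contractible_distinguished A) hT

end CategoryTheory.Pretriangulated

/-- Let `A ⊞ B ⟶ A ⊞ C ⟶ D ⟶ (A ⊞ B)⟦1⟧` be a distinguished triangle in a
pretriangulated category whose first morphism has matrix components `a : A ⟶ A`,
`b : B ⟶ A`, `c : A ⟶ C`, `d : B ⟶ C` with `a` an isomorphism. Then it is isomorphic
to the direct sum of the contractible triangle `A ⟶ A ⟶ 0 ⟶ A⟦1⟧` and a distinguished
triangle `B ⟶ C ⟶ D ⟶ B⟦1⟧` whose first morphism is `t = d - c ∘ a⁻¹ ∘ b`; in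
particular the latter is a distinguished triangle. -/
theorem distTriang_splitting_of_iso_component {T : Type*} [Category T] [Preadditive T]
    [HasZeroObject T] [HasShift T ℤ] [∀ n : ℤ, (shiftFunctor T n).Additive]
    [Pretriangulated T] [HasBinaryBiproducts T]
    {A B C D : T} (a : A ⟶ A) (b : B ⟶ A) (c : A ⟶ C) (d : B ⟶ C)
    [IsIso a]
    (s : A ⊞ C ⟶ D) (u : D ⟶ (A ⊞ B)⟦(1 : ℤ)⟧)
    (hdist : Triangle.mk (biprod.desc (biprod.lift a c) (biprod.lift b d)) s u
      ∈ distTriang T) :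
    ∃ (s₂ : C ⟶ D) (u₂ : D ⟶ B⟦(1 : ℤ)⟧),
      (Triangle.mk (d - b ≫ inv a ≫ c) s₂ u₂ ∈ distTriang T) ∧
      Nonempty
        ((Triangle.mk (biprod.desc (biprod.lift a c) (biprod.lift b d)) s u) ≅
          Triangle.mk (biprod.map (𝟙 A) (d - b ≫ inv a ≫ c))
            (biprod.map (0 : A ⟶ (0 : T)) s₂)
            (biprod.desc 0 (u₂ ≫ (biprod.inr : B ⟶ A ⊞ B)⟦(1 : ℤ)⟧'))) := by
  obtain ⟨L, R, hLR⟩ := biprod.exists_isos_desc_lift_comp_eq_map_id a c b d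
  obtain ⟨E, s₃, u₃, hE⟩ := distinguished_cocone_triangle (d - b ≫ inv a ≫ c)
  have hS := contractible_biprod_distinguished A hE
  let ψ : E ≅ D := isoZeroBiprod (isZero_zero T) ≪≫
    (Triangle.π₃.mapIso (isoTriangleOfIso₁₂ _ _ hdist hS L R hLR)).symm
  have hE' := distinguished_mk_comp_iso₃ hE ψ
  exact ⟨_, _, hE',
    ⟨isoTriangleOfIso₁₂ _ _ hdist (contractible_biprod_distinguished A hE') L R hLR⟩⟩
end
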